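/- arXiv:1607.01568 — 3 statements merged into one kernel-verified Lean document; each statement's English description precedes it below -/
import Mathlib

section
/- Let p and p' be real numbers with 0 < p < 1/2 and 0 < p' < 1. Let c1, c2, c3, c4, c5 be independent Boolean random variables with Pr[c1 = 0] = Pr[c5 = 0] = (1-2p)/(1-p), Pr[c2 = 0] = Pr[c4 = 0] = p, and Pr[c3 = 0] = p'. Then the probability of the event { c3 = 0 } ∪ { c1 = 0 ∧ c2 = 1 ∧ c3 = 1 } ∪ { c2 = 0 ∧ c3 = 1 ∧ c4 = 1 ∧ c5 = 0 } ∪ { c1 = 1 ∧ c2 = 1 ∧ c3 = 1 ∧ c4 = 1 ∧ c5 = 0 } equals 1 - 4p²(1-p'). -/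
open Finset

/-- `gadgetWeight p p' i b` is the probability that the `i`-th basis-choice bit `cᵢ`
equals `b`, where `false` encodes the bit value `0`:
`Pr[c₁ = 0] = Pr[c₅ = 0] = (1-2p)/(1-p)`, `Pr[c₂ = 0] = Pr[c₄ = 0] = p`,
`Pr[c₃ = 0] = p'` (indices are shifted to `0,…,4`). -/
noncomputable def gadgetWeight (p p' : ℝ) (i : Fin 5) (b : Bool) : ℝ :=
  let q : ℝ :=
    if i = 0 ∨ i = 4 then (1 - 2 * p) / (1 - p)
    else if i = 1 ∨ i = 3 then p
    else p'
  if b then 1 - q else q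

open scoped Classical in
/-- Probability of the event `E` under the product measure on `{0,1}⁵` with the
stated marginals. -/
noncomputable def gadgetProb (p p' : ℝ) (E : (Fin 5 → Bool) → Prop) : ℝ :=
  ∑ c : Fin 5 → Bool, if E c then ∏ i, gadgetWeight p p' i (c i) else 0

/-! Each of the four rows is a cylinder event, whose probability is the product of its
marginals, and the rows are pairwise disjoint. With `q = (1-2p)/(1-p)` one has
`(1-p) q = 1-2p` and `(1-p)(1-q) = p`, so given `c₃ = 1` the rows contribute
`(1-2p) + p(1-2p) + p(1-2p) = 1-4p²`, and the total is `p' + (1-p')(1-4p²)`. -/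

theorem Fintype.sum_ite_forall_mem_eq_prod {ι β R : Type*} [Fintype ι] [DecidableEq ι]
    [Fintype β] [DecidableEq β] [CommSemiring R] (w : ι → β → R) (s : Finset ι)
    (hw : ∀ i ∉ s, ∑ b, w i b = 1) (a : ι → β) :
    ∑ c : ι → β, (if ∀ i ∈ s, c i = a i then ∏ i, w i (c i) else 0) =
      ∏ i ∈ s, w i (a i) := by
  calc ∑ c : ι → β, (if ∀ i ∈ s, c i = a i then ∏ i, w i (c i) else 0)
      = ∑ c : ι → β, ∏ i, (if i ∈ s → c i = a i then w i (c i) else 0) := by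
        simp only [Fintype.prod_ite_zero]
    _ = ∏ i, ∑ b : β, (if i ∈ s → b = a i then w i b else 0) := by
        rw [Fintype.prod_sum]
    _ = ∏ i, (if i ∈ s then w i (a i) else 1) := by
        refine Fintype.prod_congr _ _ fun i => ?_
        by_cases hi : i ∈ s <;> simp [hi, hw i]
    _ = ∏ i ∈ s, w i (a i) := Fintype.prod_ite_mem s _

theorem gadgetWeight_sum (p p' : ℝ) (i : Fin 5) : ∑ b : Bool, gadgetWeight p p' i b = 1 := by
  rw [Fintype.sum_bool]
  simp only [gadgetWeight, if_true, Bool.false_eq_true, if_false]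
  ring

theorem gadgetProb_cylinder (p p' : ℝ) (s : Finset (Fin 5)) (a : Fin 5 → Bool) :
    gadgetProb p p' (fun c => ∀ i ∈ s, c i = a i) = ∏ i ∈ s, gadgetWeight p p' i (a i) := by
  rw [gadgetProb]
  convert Fintype.sum_ite_forall_mem_eq_prod _ s (fun i _ => gadgetWeight_sum p p' i) a

theorem gadgetProb_or (p p' : ℝ) {E F : (Fin 5 → Bool) → Prop} (h : ∀ c, E c → ¬ F c) :
    gadgetProb p p' (fun c => E c ∨ F c) = gadgetProb p p' E + gadgetProb p p' F := by
  classical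
  simp only [gadgetProb, ← Finset.sum_add_distrib]
  refine Fintype.sum_congr _ _ fun c => ?_
  by_cases hE : E c
  · simp [hE, h c hE]
  · simp [hE]

theorem gadget_zbasis_prob_general (p p' : ℝ) (hp : p < 1 / 2) :
    gadgetProb p p' (fun c =>
      c 2 = false ∨
      (c 0 = false ∧ c 1 = true ∧ c 2 = true) ∨
      (c 1 = false ∧ c 2 = true ∧ c 3 = true ∧ c 4 = false) ∨
      (c 0 = true ∧ c 1 = true ∧ c 2 = true ∧ c 3 = true ∧ c 4 = false))
      = 1 - 4 * p ^ 2 * (1 - p') := by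
  set q := (1 - 2 * p) / (1 - p)
  have row1 : gadgetProb p p' (fun c => c 2 = false) = p' := by
    simpa [gadgetWeight] using gadgetProb_cylinder p p' {2} (fun _ => false)
  have row2 : gadgetProb p p' (fun c => c 0 = false ∧ c 1 = true ∧ c 2 = true) =
      q * (1 - p) * (1 - p') := by
    simpa [gadgetWeight, mul_assoc] using
      gadgetProb_cylinder p p' {0, 1, 2} ![false, true, true, false, false]
  have row3 : gadgetProb p p' (fun c => c 1 = false ∧ c 2 = true ∧ c 3 = true ∧ c 4 = false) =
      p * (1 - p') * (1 - p) * q := by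
    simpa [gadgetWeight, mul_assoc] using
      gadgetProb_cylinder p p' {1, 2, 3, 4} ![false, false, true, true, false]
  have row4 : gadgetProb p p' (fun c =>
      c 0 = true ∧ c 1 = true ∧ c 2 = true ∧ c 3 = true ∧ c 4 = false) =
      (1 - q) * (1 - p) * (1 - p') * (1 - p) * q := by
    simpa [gadgetWeight, mul_assoc] using
      gadgetProb_cylinder p p' {0, 1, 2, 3, 4} ![true, true, true, true, false]
  rw [gadgetProb_or _ _ (by simp_all), gadgetProb_or _ _ (by simp_all),
    gadgetProb_or _ _ (by simp_all), row1, row2, row3, row4]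
  have hp1 : 1 - p ≠ 0 := by linarith
  simp only [q]
  field_simp
  ring

/-- The probability that the gadget's output is a computational-basis (Z-basis) state
equals `1 - 4p²(1-p')`. -/
theorem gadget_zbasis_prob (p p' : ℝ) (hp0 : 0 < p) (hp : p < 1 / 2)
    (hp'0 : 0 < p') (hp' : p' < 1) :
    gadgetProb p p' (fun c =>
      c 2 = false ∨
      (c 0 = false ∧ c 1 = true ∧ c 2 = true) ∨
      (c 1 = false ∧ c 2 = true ∧ c 3 = true ∧ c 4 = false) ∨
      (c 0 = true ∧ c 1 = true ∧ c 2 = true ∧ c 3 = true ∧ c 4 = false))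
      = 1 - 4 * p ^ 2 * (1 - p') :=
  gadget_zbasis_prob_general p p' hp
end

section
/- Let p, p' be real with 0 < p < 1/2, 0 < p' < 1. Let c = (c1,...,c5) and a = (a1,...,a5) be independent Boolean random vectors, where a1,...,a5 are independent uniform bits, and c1,...,c5 are independent with Pr[c1 = 0] = Pr[c5 = 0] = (1-2p)/(1-p), Pr[c2 = 0] = Pr[c4 = 0] = p, Pr[c3 = 0] = p'. Define the label L(a,c), taking values in the ten-element set {Z_0, Z_1, P_0, P_1, ..., P_7}, by the case distinction given in the context. Then Pr[L = Z_0] = Pr[L = Z_1] = (1 - 4p²(1-p'))/2, and Pr[L = P_k] = p²(1-p')/2 for every k ∈ {0,1,...,7}. -/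
open Finset

/-- The ten possible output states of the gadget (up to global phase):
`Z b` is the computational-basis state `|b⟩` and `P k` is the rotated state
`|+ₖ⟩ = (|0⟩ + e^{ikπ/4}|1⟩)/√2`. -/
inductive GadgetLabel
  | Z : Bool → GadgetLabel
  | P : Fin 8 → GadgetLabel
  deriving DecidableEq

open scoped Classical in
/-- Probability of the event `E ⊆ {0,1}⁵ × {0,1}⁵` where the `a`-bits are uniform
and the `c`-bits have the stated marginals, all independent. -/
noncomputable def gadgetProb2 (p p' : ℝ)
    (E : (Fin 5 → Bool) → (Fin 5 → Bool) → Prop) : ℝ :=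
  ∑ a : Fin 5 → Bool, ∑ c : Fin 5 → Bool,
    if E a c then (∏ _i : Fin 5, (1 / 2 : ℝ)) * ∏ i, gadgetWeight p p' i (c i) else 0

open Fin.NatCast in
/-- The label of the gadget's output state, as a function of the random bits
`a = (a₁,…,a₅)` and `c = (c₁,…,c₅)` (0-indexed; `false` encodes bit `0`). -/
def gadgetLabel (a c : Fin 5 → Bool) : GadgetLabel :=
  if c 2 = false then .Z (a 2)
  else if c 0 = false ∧ c 1 = true then .Z (xor (a 0) (a 1))
  else if c 1 = false ∧ c 3 = true ∧ c 4 = false then .Z (xor (a 3) (a 4))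
  else if c 0 = true ∧ c 1 = true ∧ c 3 = true ∧ c 4 = false then .Z (xor (a 3) (a 4))
  else if c 1 = false ∧ c 3 = false then
    .P ((4 * (xor (a 1) (xor (a 2) (a 3))).toNat : ℕ))
  else if c 1 = false ∧ c 3 = true ∧ c 4 = true then
    .P ((2 + 4 * (xor (a 1) (xor (a 2) (xor (a 3) (a 4)))).toNat : ℕ))
  else if c 0 = true ∧ c 1 = true ∧ c 3 = false then
    (if a 1 = false then .P ((1 + 4 * (xor (a 0) (xor (a 2) (a 3))).toNat : ℕ))
     else .P ((7 - 4 * (xor (a 0) (xor (a 2) (a 3))).toNat : ℕ)))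
  else
    (if a 1 = false then
      .P ((3 + 4 * (xor (a 0) (xor (a 1) (xor (a 2) (xor (a 3) (a 4))))).toNat : ℕ))
     else
      .P ((5 - 4 * (xor (a 0) (xor (a 1) (xor (a 2) (xor (a 3) (a 4))))).toNat : ℕ)))

/-!
Condition on the basis choices `c`. The label is then a balanced function of the uniform bits
`a`: off the four cylinder sets of `c` on which a rotated state is produced it is `Z` of a
parity of `a`, and on those cylinders it is `P k` with `k` read off from a parity of `a`
(and, on the last two, from `a₂`), each admissible label being hit by the same number of `a`.
Each cylinder has weight `p²(1-p')` under the law of `c`, which gives the stated values.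
-/

open Fintype

variable {p p' : ℝ}

theorem gadgetWeight_true_add_false (i : Fin 5) :
    gadgetWeight p p' i true + gadgetWeight p p' i false = 1 := by
  simp [gadgetWeight]

noncomputable def choiceWeight (p p' : ℝ) (c : Fin 5 → Bool) : ℝ :=
  ∏ i, gadgetWeight p p' i (c i)

theorem sum_choiceWeight_piFinset (S : Fin 5 → Finset Bool) :
    ∑ c ∈ piFinset S, choiceWeight p p' c = ∏ i, ∑ b ∈ S i, gadgetWeight p p' i b :=
  (prod_univ_sum S _).symm

theorem sum_choiceWeight : ∑ c, choiceWeight p p' c = 1 := by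
  rw [← piFinset_univ, sum_choiceWeight_piFinset]
  simp [gadgetWeight_true_add_false]

theorem gadgetProb2_eq_of_card_filter (E : (Fin 5 → Bool) → (Fin 5 → Bool) → Prop)
    [∀ a c, Decidable (E a c)] (T : Finset (Fin 5 → Bool)) (m : ℕ)
    (hE : ∀ c, #{a | E a c} = if c ∈ T then m else 0) :
    gadgetProb2 p p' E = m / 32 * ∑ c ∈ T, choiceWeight p p' c := by
  have hcard : ∀ c, ∑ a, (if E a c then (1 / 32 : ℝ) * choiceWeight p p' c else 0)
      = if c ∈ T then m / 32 * choiceWeight p p' c else 0 := by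
    intro c
    rw [← sum_filter, sum_const, nsmul_eq_mul, hE c]
    split_ifs
    · ring
    · simp
  unfold gadgetProb2
  norm_num only [prod_const, card_univ, Fintype.card_fin]
  rw [sum_comm, mul_sum, ← Fintype.sum_ite_mem T]
  exact Fintype.sum_congr _ _ fun c => by convert hcard c; rfl

/-- The four cases of `gadgetLabel` with a rotated output, as cylinder sets of `c`
(0-indexed; `univ` marks a free bit). -/
def rotatedPattern : Fin 4 → Fin 5 → Finset Bool :=
  ![![univ, {false}, {true}, {false}, univ],
    ![univ, {false}, {true}, {true}, {true}],
    ![{true}, {true}, {true}, {false}, univ],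
    ![{true}, {true}, {true}, {true}, {true}]]

/-- The factor `Pr[c₁ = 1] = Pr[c₅ = 1] = p / (1 - p)` cancels against
`Pr[c₂ = 1] = Pr[c₄ = 1] = 1 - p`. -/
theorem sum_choiceWeight_rotatedPattern (hp : p ≠ 1) (j : Fin 4) :
    ∑ c ∈ piFinset (rotatedPattern j), choiceWeight p p' c = p ^ 2 * (1 - p') := by
  have : 1 - p ≠ 0 := sub_ne_zero.mpr hp.symm
  rw [sum_choiceWeight_piFinset]
  fin_cases j <;> simp [rotatedPattern, Fin.prod_univ_five, gadgetWeight] <;> field_simp <;> ring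

def rotatedSupport : Finset (Fin 5 → Bool) :=
  univ.biUnion fun j => piFinset (rotatedPattern j)

theorem sum_choiceWeight_rotatedSupport (hp : p ≠ 1) :
    ∑ c ∈ rotatedSupport, choiceWeight p p' c = 4 * (p ^ 2 * (1 - p')) := by
  have hdisj : ((univ : Finset (Fin 4)) : Set (Fin 4)).PairwiseDisjoint
      fun j => piFinset (rotatedPattern j) := by
    rintro i - j -
    revert i j
    decide
  rw [rotatedSupport, sum_biUnion hdisj]
  simp [sum_choiceWeight_rotatedPattern hp]

theorem sum_choiceWeight_compl_rotatedSupport (hp : p ≠ 1) :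
    ∑ c ∈ rotatedSupportᶜ, choiceWeight p p' c = 1 - 4 * (p ^ 2 * (1 - p')) := by
  refine eq_sub_of_add_eq ?_
  rw [← sum_choiceWeight_rotatedSupport hp, sum_compl_add_sum, sum_choiceWeight]

theorem card_filter_gadgetLabel_eq_Z (b : Bool) (c : Fin 5 → Bool) :
    #{a | gadgetLabel a c = .Z b} = if c ∈ rotatedSupportᶜ then 16 else 0 := by
  revert b c
  decide +kernel

theorem gadgetProb2_label_eq_P_of_rotatedPattern (hp : p ≠ 1) (k : Fin 8) (j : Fin 4)
    (hk : ∀ c, #{a | gadgetLabel a c = .P k} =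
      if c ∈ piFinset (rotatedPattern j) then 16 else 0) :
    gadgetProb2 p p' (fun a c => gadgetLabel a c = .P k) = p ^ 2 * (1 - p') / 2 := by
  rw [gadgetProb2_eq_of_card_filter _ _ _ hk, sum_choiceWeight_rotatedPattern hp]
  ring

theorem gadgetProb2_label_eq_P_of_rotatedPattern_two_three (hp : p ≠ 1) (k : Fin 8)
    (hk : ∀ c, #{a | gadgetLabel a c = .P k} =
      if c ∈ piFinset (rotatedPattern 2) ∪ piFinset (rotatedPattern 3) then 8 else 0) :
    gadgetProb2 p p' (fun a c => gadgetLabel a c = .P k) = p ^ 2 * (1 - p') / 2 := by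
  rw [gadgetProb2_eq_of_card_filter _ _ _ hk, sum_union (by decide),
    sum_choiceWeight_rotatedPattern hp, sum_choiceWeight_rotatedPattern hp]
  ring

theorem gadget_label_probs_general (p p' : ℝ) (hp : p < 1 / 2) :
    (∀ b : Bool,
      gadgetProb2 p p' (fun a c => gadgetLabel a c = GadgetLabel.Z b)
        = (1 - 4 * p ^ 2 * (1 - p')) / 2) ∧
    (∀ k : Fin 8,
      gadgetProb2 p p' (fun a c => gadgetLabel a c = GadgetLabel.P k)
        = p ^ 2 * (1 - p') / 2) := by
  have hp1 : p ≠ 1 := by linarith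
  refine ⟨fun b => ?_, fun k => ?_⟩
  · rw [gadgetProb2_eq_of_card_filter _ _ _ (card_filter_gadgetLabel_eq_Z b),
      sum_choiceWeight_compl_rotatedSupport hp1]
    ring
  · fin_cases k
    · exact gadgetProb2_label_eq_P_of_rotatedPattern hp1 _ 0 (by decide +kernel)
    · exact gadgetProb2_label_eq_P_of_rotatedPattern_two_three hp1 _ (by decide +kernel)
    · exact gadgetProb2_label_eq_P_of_rotatedPattern hp1 _ 1 (by decide +kernel)
    · exact gadgetProb2_label_eq_P_of_rotatedPattern_two_three hp1 _ (by decide +kernel)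
    · exact gadgetProb2_label_eq_P_of_rotatedPattern hp1 _ 0 (by decide +kernel)
    · exact gadgetProb2_label_eq_P_of_rotatedPattern_two_three hp1 _ (by decide +kernel)
    · exact gadgetProb2_label_eq_P_of_rotatedPattern hp1 _ 1 (by decide +kernel)
    · exact gadgetProb2_label_eq_P_of_rotatedPattern_two_three hp1 _ (by decide +kernel)

/-- Each computational-basis label occurs with probability `(1 - 4p²(1-p'))/2` and each
rotated label `P k` occurs with probability `p²(1-p')/2`. -/
theorem gadget_label_probs (p p' : ℝ) (hp0 : 0 < p) (hp : p < 1 / 2)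
    (hp'0 : 0 < p') (hp' : p' < 1) :
    (∀ b : Bool,
      gadgetProb2 p p' (fun a c => gadgetLabel a c = GadgetLabel.Z b)
        = (1 - 4 * p ^ 2 * (1 - p')) / 2) ∧
    (∀ k : Fin 8,
      gadgetProb2 p p' (fun a c => gadgetLabel a c = GadgetLabel.P k)
        = p ^ 2 * (1 - p') / 2) :=
  gadget_label_probs_general p p' hp
end

section
/- Let (F_j) be a finite family of 2×2 complex matrices satisfying Σ_j trace(F_j · F_j†) = 2 (equivalently, the completely positive map F(ρ) = Σ_j F_j ρ F_j† satisfies trace F(I/2) = 1). Define the Pauli-twirled map E(ρ) = (1/4) Σ_{o1 ∈ {0,1}} Σ_{o2 ∈ {0,1}} Σ_j (X^{o1} Z^{o2} F_j X^{o1} Z^{o2}) ρ (X^{o1} Z^{o2} F_j X^{o1} Z^{o2})†. Then E is trace preserving: trace(E(ρ)) = trace(ρ) for every 2×2 complex matrix ρ. -/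
/-!
Writing `P = X^{o₁} Z^{o₂}`, the twirled Kraus operator is `P F P`, and since `P` is unitary the
cyclicity of the trace gives `tr((P F P) ρ (P F P)†) = tr(F (P ρ P†) F†)`. Averaging `P ρ P†` over
the four Paulis is the completely depolarizing channel, `Σ_P P ρ P† = 2 tr(ρ) I`, so the whole sum
collapses to `(1/4) · 2 tr(ρ) Σⱼ tr(Fⱼ Fⱼ†) = tr ρ`.
-/

open Matrix

/-- The Pauli `X` matrix. -/
def pauliX : Matrix (Fin 2) (Fin 2) ℂ := !![0, 1; 1, 0]

/-- The Pauli `Z` matrix. -/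
def pauliZ : Matrix (Fin 2) (Fin 2) ℂ := !![1, 0; 0, -1]

theorem Matrix.trace_mul_mul_conjTranspose_of_conjTranspose_mul_self
    {n R : Type*} [Fintype n] [DecidableEq n] [CommSemiring R] [StarRing R]
    {U : Matrix n n R} (hU : Uᴴ * U = 1) (A ρ : Matrix n n R) :
    (U * A * U * ρ * (U * A * U)ᴴ).trace = (A * (U * ρ * Uᴴ) * Aᴴ).trace := by
  have hcycle : U * A * U * ρ * (U * A * U)ᴴ = U * (A * (U * ρ * Uᴴ) * Aᴴ * Uᴴ) := by
    simp only [conjTranspose_mul, Matrix.mul_assoc]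
  rw [hcycle, trace_mul_comm, Matrix.mul_assoc, hU, Matrix.mul_one]

theorem pauliX_isHermitian : pauliX.IsHermitian := by
  ext i j
  fin_cases i <;> fin_cases j <;> simp [pauliX]

theorem pauliZ_isHermitian : pauliZ.IsHermitian := by
  ext i j
  fin_cases i <;> fin_cases j <;> simp [pauliZ]

theorem pauliX_mem_unitaryGroup : pauliX ∈ unitaryGroup (Fin 2) ℂ := by
  rw [mem_unitaryGroup_iff', star_eq_conjTranspose, pauliX_isHermitian.eq]
  ext i j
  fin_cases i <;> fin_cases j <;> simp [pauliX, Matrix.mul_apply, Fin.sum_univ_two]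

theorem pauliZ_mem_unitaryGroup : pauliZ ∈ unitaryGroup (Fin 2) ℂ := by
  rw [mem_unitaryGroup_iff', star_eq_conjTranspose, pauliZ_isHermitian.eq]
  ext i j
  fin_cases i <;> fin_cases j <;> simp [pauliZ, Matrix.mul_apply, Fin.sum_univ_two]

theorem conjTranspose_mul_self_pauliX_pow_mul_pauliZ_pow (a b : ℕ) :
    (pauliX ^ a * pauliZ ^ b)ᴴ * (pauliX ^ a * pauliZ ^ b) = 1 := by
  rw [← star_eq_conjTranspose]
  exact Unitary.star_mul_self_of_mem <|
    mul_mem (pow_mem pauliX_mem_unitaryGroup a) (pow_mem pauliZ_mem_unitaryGroup b)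

theorem sum_pauli_mul_mul_conjTranspose (ρ : Matrix (Fin 2) (Fin 2) ℂ) :
    ∑ a : Fin 2, ∑ b : Fin 2,
        pauliX ^ (a : ℕ) * pauliZ ^ (b : ℕ) * ρ * (pauliX ^ (a : ℕ) * pauliZ ^ (b : ℕ))ᴴ
      = (2 * ρ.trace) • 1 := by
  simp only [Fin.sum_univ_two, Fin.val_zero, Fin.val_one, pow_zero, pow_one, Matrix.one_mul,
    Matrix.mul_one, conjTranspose_mul, conjTranspose_one, pauliX_isHermitian.eq,
    pauliZ_isHermitian.eq]
  rw [eta_fin_two ρ]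
  simp [pauliX, pauliZ, trace_fin_two, one_fin_two]
  constructor <;> ring

theorem sum_trace_pauli_twirl (M ρ : Matrix (Fin 2) (Fin 2) ℂ) :
    ∑ a : Fin 2, ∑ b : Fin 2,
        ((pauliX ^ (a : ℕ) * pauliZ ^ (b : ℕ) * M * pauliX ^ (a : ℕ) * pauliZ ^ (b : ℕ)) * ρ *
          (pauliX ^ (a : ℕ) * pauliZ ^ (b : ℕ) * M * pauliX ^ (a : ℕ) * pauliZ ^ (b : ℕ))ᴴ).trace
      = 2 * ρ.trace * (M * Mᴴ).trace := by
  have hreassoc (a b : ℕ) : pauliX ^ a * pauliZ ^ b * M * pauliX ^ a * pauliZ ^ b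
      = pauliX ^ a * pauliZ ^ b * M * (pauliX ^ a * pauliZ ^ b) := by
    simp only [Matrix.mul_assoc]
  simp_rw [hreassoc, trace_mul_mul_conjTranspose_of_conjTranspose_mul_self
    (conjTranspose_mul_self_pauliX_pow_mul_pauliZ_pow _ _), ← trace_sum, ← Matrix.sum_mul,
    ← Matrix.mul_sum, sum_pauli_mul_mul_conjTranspose]
  rw [Matrix.mul_smul, Matrix.mul_one, Matrix.smul_mul, trace_smul, smul_eq_mul]

/-- If the Kraus family `(Fⱼ)` satisfies `Σⱼ tr(Fⱼ Fⱼ†) = 2`, then the Pauli-twirled map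
`E(ρ) = (1/4) Σ_{o₁,o₂,j} (X^{o₁}Z^{o₂}FⱼX^{o₁}Z^{o₂}) ρ (X^{o₁}Z^{o₂}FⱼX^{o₁}Z^{o₂})†`
is trace preserving. -/
theorem pauli_twirled_trace_preserving (n : ℕ) (F : Fin n → Matrix (Fin 2) (Fin 2) ℂ)
    (hF : ∑ j, (F j * (F j)ᴴ).trace = 2) (ρ : Matrix (Fin 2) (Fin 2) ℂ) :
    ((1 / 4 : ℂ) • ∑ o1 : Fin 2, ∑ o2 : Fin 2, ∑ j,
        (pauliX ^ (o1 : ℕ) * pauliZ ^ (o2 : ℕ) * F j *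
            pauliX ^ (o1 : ℕ) * pauliZ ^ (o2 : ℕ)) * ρ *
          (pauliX ^ (o1 : ℕ) * pauliZ ^ (o2 : ℕ) * F j *
            pauliX ^ (o1 : ℕ) * pauliZ ^ (o2 : ℕ))ᴴ).trace
      = ρ.trace := by
  simp only [trace_smul, trace_sum]
  rw [Finset.sum_congr rfl fun _ _ => Finset.sum_comm, Finset.sum_comm]
  simp_rw [sum_trace_pauli_twirl, ← Finset.mul_sum, hF, smul_eq_mul]
  ring
end
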